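/- Necessary Condition 1: Let P be a finite set of points in the plane in general position. If P admits a 4-connected triangulation, then |P'| >= |CH(P)|, where P' is the set of points of P interior to CH(P) and |CH(P)| is the number of vertices of CH(P). -/

import Mathlib

open scoped Classical

noncomputable section

/-- Points of the plane. -/
abbrev Pt : Type := ℝ × ℝ

/-- Orientation determinant of two plane vectors. -/
def det2 (u v : Pt) : ℝ := u.1 * v.2 - u.2 * v.1

/-- `P` is in general position: no three distinct points of `P` are collinear. -/
def GenPos (P : Finset Pt) : Prop :=
  ∀ p ∈ P, ∀ q ∈ P, ∀ r ∈ P, p ≠ q → p ≠ r → q ≠ r → ¬Collinear ℝ ({p, q, r} : Set Pt)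

/-- The vertices of the convex hull of `P` (the extreme points of `P`). -/
def hullVx (P : Finset Pt) : Finset Pt :=
  P.filter fun p => p ∉ convexHull ℝ ((P.erase p : Finset Pt) : Set Pt)

/-- The points of `P` lying in the interior of the convex hull of `P`. -/
def intPts (P : Finset Pt) : Finset Pt :=
  P.filter fun p => p ∈ interior (convexHull ℝ (P : Set Pt))

/-- `p` and `q` are consecutive vertices of the convex hull of `P`
(the segment joining them is an edge of the hull boundary). -/
def HullEdge (P : Finset Pt) (p q : Pt) : Prop :=
  p ∈ hullVx P ∧ q ∈ hullVx P ∧ p ≠ q ∧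
    segment ℝ p q ⊆ frontier (convexHull ℝ (P : Set Pt))

/-- A plane graph with vertex set `P`, all of whose edges are straight line
segments: edges may only meet at common endpoints. -/
structure PlaneGraph (P : Finset Pt) where
  Adj : Pt → Pt → Prop
  symm : ∀ {p q}, Adj p q → Adj q p
  mem_left : ∀ {p q}, Adj p q → p ∈ P
  ne : ∀ {p q}, Adj p q → p ≠ q
  noncross : ∀ {p q r s}, Adj p q → Adj r s →
    (openSegment ℝ p q ∩ openSegment ℝ r s).Nonempty → ({p, q} : Set Pt) = {r, s}

/-- A triangulation of `P`: a plane straight-line graph on `P` that is maximal,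
i.e. no further segment between points of `P` can be added without crossing an
existing edge.  (For a finite point set in general position this is equivalent
to: the outer face is the complement of the convex hull and every bounded face
is a triangle.) -/
structure Triangulation (P : Finset Pt) extends PlaneGraph P where
  maximal : ∀ p ∈ P, ∀ q ∈ P, p ≠ q → ¬Adj p q →
    ∃ r s, Adj r s ∧ ({p, q} : Set Pt) ≠ {r, s} ∧
      (openSegment ℝ p q ∩ openSegment ℝ r s).Nonempty

/-- The abstract graph underlying a plane graph. -/
def PlaneGraph.graph {P : Finset Pt} (G : PlaneGraph P) : SimpleGraph {x // x ∈ P} where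
  Adj p q := G.Adj p q
  symm := ⟨fun _ _ h => G.symm h⟩
  loopless := ⟨fun _ h => G.ne h rfl⟩

/-- A graph is `k`-connected if it has at least `k+1` vertices and no set of at
most `k-1` vertices disconnects it (removing fewer than `k` vertices leaves a
connected graph). -/
def KConnected {V : Type*} [Fintype V] (G : SimpleGraph V) (k : ℕ) : Prop :=
  k + 1 ≤ Fintype.card V ∧
    ∀ S : Finset V, S.card < k → (G.induce ((↑S : Set V)ᶜ)).Connected

/-- A chord of a plane graph on `P`: an edge joining two nonconsecutive
vertices of the convex hull of `P`. -/
def IsChord {P : Finset Pt} (G : PlaneGraph P) (p q : Pt) : Prop :=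
  G.Adj p q ∧ p ∈ hullVx P ∧ q ∈ hullVx P ∧ ¬HullEdge P p q

/-- Three points forming a triangle of the graph `G` (pairwise adjacent). -/
def IsTriangleOf {P : Finset Pt} (G : PlaneGraph P) (p q r : Pt) : Prop :=
  G.Adj p q ∧ G.Adj q r ∧ G.Adj p r

/-- A complex triangle of `G`: a triangle formed by three edges of `G` that
contains a point of `P` in its interior and another point of `P` in its
exterior. -/
def IsComplexTri {P : Finset Pt} (G : PlaneGraph P) (p q r : Pt) : Prop :=
  IsTriangleOf G p q r ∧
    (∃ x ∈ P, x ∈ interior (convexHull ℝ ({p, q, r} : Set Pt))) ∧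
    (∃ y ∈ P, y ∉ convexHull ℝ ({p, q, r} : Set Pt))

/-- A triangulation is noncomplex if it has neither chords nor complex
triangles. -/
def Noncomplex {P : Finset Pt} (T : Triangulation P) : Prop :=
  (∀ p q, ¬IsChord T.toPlaneGraph p q) ∧ ∀ p q r, ¬IsComplexTri T.toPlaneGraph p q r

/-- `Q` is anomalous: its convex hull is a triangle and there is a hull vertex
`p` such that every point of `Q \ {p}` lies on the boundary of the convex hull
of `Q \ {p}`. -/
def Anomalous (Q : Finset Pt) : Prop :=
  (hullVx Q).card = 3 ∧
    ∃ p ∈ hullVx Q, ∀ q ∈ Q.erase p,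
      q ∉ interior (convexHull ℝ ((Q.erase p : Finset Pt) : Set Pt))

/-- `s` is a vertex of the convex hull of `P` lying strictly between `pr` and
`pt` in counterclockwise order (i.e. on the open counterclockwise hull arc
from `pr` to `pt`; for a hull traversed counterclockwise these are exactly the
hull vertices strictly on the right of the directed chord `pr → pt`). -/
def CCWBetween (P : Finset Pt) (pr pt s : Pt) : Prop :=
  s ∈ hullVx P ∧ det2 (pt - pr) (s - pr) < 0

/-- The set `S` of hull vertices strictly between `pr` and `pt`
counterclockwise. -/
def cutSet (P : Finset Pt) (pr pt : Pt) : Finset Pt :=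
  P.filter fun s => CCWBetween P pr pt s

/-- An inward triangle of a plane graph `G` on `P`: a triangle of `G` two of
whose vertices `b`, `c` are consecutive hull vertices and whose third vertex
`a` (its inward vertex) is an interior point of the hull. -/
def InwardTri {P : Finset Pt} (G : PlaneGraph P) (b c a : Pt) : Prop :=
  IsTriangleOf G b c a ∧ HullEdge P b c ∧ a ∈ intPts P

/-- A (geometric) inward triangle of the point set `P`: its base `b c` is an
edge of the hull and its inward vertex `a` is an interior point. -/
def GInwardTri (P : Finset Pt) (b c a : Pt) : Prop :=
  HullEdge P b c ∧ a ∈ intPts P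

/-- The triangle `b c a` contains no point of `P` in its interior. -/
def EmptyTri (P : Finset Pt) (b c a : Pt) : Prop :=
  ∀ x ∈ P, x ∉ interior (convexHull ℝ ({b, c, a} : Set Pt))

/-- The inward triangle `b c a` is forbidden: for some hull vertices `pr ≠ pt`,
its base edge lies on the clockwise hull chain from `pr` to `pt` (i.e. `b`, `c`
are not strictly counterclockwise between `pr` and `pt`) while its inward
vertex lies on the boundary of the convex hull of `Q = P \ S`. -/
def ForbiddenTri (P : Finset Pt) (b c a : Pt) : Prop :=
  ∃ pr ∈ hullVx P, ∃ pt ∈ hullVx P, pr ≠ pt ∧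
    b ∉ cutSet P pr pt ∧ c ∉ cutSet P pr pt ∧
    a ∉ interior (convexHull ℝ ((P \ cutSet P pr pt : Finset Pt) : Set Pt))

/-- A triangle, recorded as `(b, c, a)` with base `b c` and inward vertex `a`. -/
abbrev Tri : Type := Pt × Pt × Pt

def triVerts (t : Tri) : Set Pt := {t.1, t.2.1, t.2.2}

def triInterior (t : Tri) : Set Pt := interior (convexHull ℝ (triVerts t))

/-- A non-forbidden empty inward triangle of `P`. -/
def GoodTri (P : Finset Pt) (t : Tri) : Prop :=
  GInwardTri P t.1 t.2.1 t.2.2 ∧ EmptyTri P t.1 t.2.1 t.2.2 ∧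
    ¬ForbiddenTri P t.1 t.2.1 t.2.2

/-- Two triangles share an edge (i.e. share two distinct vertices). -/
def ShareEdge (t₁ t₂ : Tri) : Prop :=
  ∃ u v : Pt, u ≠ v ∧ u ∈ triVerts t₁ ∧ v ∈ triVerts t₁ ∧
    u ∈ triVerts t₂ ∧ v ∈ triVerts t₂

/-- A compatible set of triangles: all its members are non-forbidden empty
inward triangles, and no two (distinct) members share an edge, an inward
vertex, or an interior point. -/
def Compatible (P : Finset Pt) (Tc : Finset Tri) : Prop :=
  (∀ t ∈ Tc, GoodTri P t) ∧
    ∀ t₁ ∈ Tc, ∀ t₂ ∈ Tc, triVerts t₁ ≠ triVerts t₂ →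
      ¬ShareEdge t₁ t₂ ∧ t₁.2.2 ≠ t₂.2.2 ∧ triInterior t₁ ∩ triInterior t₂ = ∅

/-- A maximal compatible set: no inward triangle can be added while keeping it
compatible. -/
def MaxCompatible (P : Finset Pt) (Tc : Finset Tri) : Prop :=
  Compatible P Tc ∧
    ∀ t : Tri, Compatible P (insert t Tc) → ∃ t' ∈ Tc, triVerts t' = triVerts t

/-- The number of triangles of `Tc` whose inward vertex is a vertex of the
convex hull of `P'` (counted up to the underlying vertex set). -/
def tcPrimeCard (P : Finset Pt) (Tc : Finset Tri) : ℕ :=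
  ((Tc.filter fun t => t.2.2 ∈ hullVx (intPts P)).image triVerts).card

/-- `max|T_c'|`: the maximum, over all maximal compatible sets `T_c`, of the
number of triangles of `T_c` whose inward vertex is a hull vertex of `P'`. -/
noncomputable def maxTcPrime (P : Finset Pt) : ℕ :=
  sSup {m | ∃ Tc : Finset Tri, MaxCompatible P Tc ∧ m = tcPrimeCard P Tc}


/-!
In a 4-connected plane graph on `P` every vertex has degree at least 4, and no vertex `a` is
adjacent to three hull vertices. Indeed, an edge avoiding `a` cannot cross the ray from `a` through
a hull vertex `v` adjacent to `a`: before `v` it would cross the edge `av`, beyond `v` it would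
leave the convex hull. So the open cone at `a` spanned by two such edges is separated from the rest
of the graph by `a` and the two hull vertices, and for one of the three pairs this cone separates
the third hull vertex from a fifth point.

Hence every hull vertex has at least two neighbours off the hull and every point at most two
neighbours on it. Double counting the edges between the two classes gives
`|CH(P)| ≤ |P \ CH(P)|`, and in general position the points off the hull are interior points.
-/

theorem det2_swap (u v : Pt) : det2 u v = -det2 v u := by
  unfold det2; ring

theorem det2_add_smul_sub_left (a b c w : Pt) (t : ℝ) :
    det2 (b + t • (c - b) - a) w = (1 - t) * det2 (b - a) w + t * det2 (c - a) w := by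
  simp only [det2, Prod.fst_add, Prod.fst_sub, Prod.snd_add, Prod.snd_sub, Prod.smul_fst,
    Prod.smul_snd, smul_eq_mul]
  ring

theorem det2_add_smul_sub_right (a b c w : Pt) (t : ℝ) :
    det2 w (b + t • (c - b) - a) = (1 - t) * det2 w (b - a) + t * det2 w (c - a) := by
  rw [det2_swap, det2_add_smul_sub_left, det2_swap (b - a), det2_swap (c - a)]
  ring

/-- Cramer's rule. -/
theorem det2_smul_eq_add (u v w : Pt) : det2 u v • w = det2 w v • u + det2 u w • v := by
  ext <;> simp only [det2, Prod.fst_add, Prod.snd_add, Prod.smul_fst, Prod.smul_snd,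
    smul_eq_mul] <;> ring

theorem eq_div_smul_of_det2_eq_zero {u v w : Pt} (hD : det2 u v ≠ 0) (h : det2 w v = 0) :
    w = (det2 u w / det2 u v) • v := by
  have hC := det2_smul_eq_add u v w
  rw [h, zero_smul, zero_add] at hC
  rw [div_eq_inv_mul, mul_smul, ← hC, inv_smul_smul₀ hD]

theorem exists_nonneg_smul_of_det2_eq_zero {u v w : Pt} (hD : det2 u v ≠ 0)
    (h : det2 w v = 0) (hw : 0 ≤ det2 u w * det2 u v) : ∃ s : ℝ, 0 ≤ s ∧ w = s • v := by
  refine ⟨det2 u w / det2 u v, ?_, eq_div_smul_of_det2_eq_zero hD h⟩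
  rw [← mul_div_mul_right _ _ hD]
  exact div_nonneg hw (mul_self_nonneg _)

theorem collinear_of_det2_eq_zero {p q r : Pt} (h : det2 (q - p) (r - p) = 0) :
    Collinear ℝ ({p, q, r} : Set Pt) := by
  rcases eq_or_ne q p with rfl | hqp
  · simpa using collinear_pair ℝ q r
  have hD : det2 (-(q - p).2, (q - p).1) (q - p) ≠ 0 := by
    have : (q - p).1 ≠ 0 ∨ (q - p).2 ≠ 0 := by
      by_contra! h0
      exact hqp (sub_eq_zero.1 (Prod.ext h0.1 h0.2))
    simp only [det2]
    rcases this with h0 | h0 <;> nlinarith [sq_pos_of_ne_zero h0, sq_nonneg (q - p).1,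
      sq_nonneg (q - p).2]
  have hr := eq_div_smul_of_det2_eq_zero hD (by rw [det2_swap, h, neg_zero])
  rw [collinear_iff_of_mem (Set.mem_insert p _)]
  refine ⟨q - p, ?_⟩
  rintro x (rfl | rfl | rfl)
  · exact ⟨0, by simp⟩
  · exact ⟨1, by simp⟩
  · exact ⟨_, by rw [vadd_eq_add, ← hr, sub_add_cancel]⟩

theorem det2_sub_eq_zero_of_map_eq {f : Pt →ₗ[ℝ] ℝ} (hf : f ≠ 0) {p q r : Pt}
    (hq : f q = f p) (hr : f r = f p) : det2 (q - p) (r - p) = 0 := by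
  have hfx : ∀ x : Pt, f x = x.1 * f (1, 0) + x.2 * f (0, 1) := fun x => by
    conv_lhs => rw [show x = x.1 • ((1 : ℝ), (0 : ℝ)) + x.2 • ((0 : ℝ), (1 : ℝ)) by ext <;> simp]
    rw [map_add, map_smul, map_smul, smul_eq_mul, smul_eq_mul]
  have hc : f (1, 0) ≠ 0 ∨ f (0, 1) ≠ 0 := by
    by_contra! h0
    exact hf (LinearMap.ext fun x => by rw [hfx, h0.1, h0.2]; simp)
  have hq' := hfx (q - p)
  have hr' := hfx (r - p)
  rw [map_sub, hq, sub_self] at hq'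
  rw [map_sub, hr, sub_self] at hr'
  simp only [det2]
  rcases hc with hc | hc
  · refine (mul_eq_zero.1 ?_).resolve_left hc
    linear_combination (q - p).2 * hr' - (r - p).2 * hq'
  · refine (mul_eq_zero.1 ?_).resolve_left hc
    linear_combination (r - p).1 * hq' - (q - p).1 * hr'

theorem exists_ne_map_eq_of_mem_convexHull_erase {E : Type*} [AddCommGroup E] [Module ℝ E]
    [DecidableEq E] {s : Finset E} {p : E} (f : E →ₗ[ℝ] ℝ)
    (hp : p ∈ convexHull ℝ ((s.erase p : Finset E) : Set E)) (hf : ∀ q ∈ s, f q ≤ f p) :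
    ∃ q₁ ∈ s.erase p, ∃ q₂ ∈ s.erase p, q₁ ≠ q₂ ∧ f q₁ = f p ∧ f q₂ = f p := by
  set t := (s.erase p).filter (fun q => f q = f p)
  obtain ⟨w, hw₀, hw₁, hwp⟩ := Finset.mem_convexHull'.1 hp
  have hft : ∑ q ∈ s.erase p, w q * (f p - f q) = 0 := by
    have := congrArg f hwp
    simp only [map_sum, map_smul, smul_eq_mul] at this
    simp only [mul_sub, Finset.sum_sub_distrib, ← Finset.sum_mul, hw₁, one_mul, this, sub_self]
  have hw : ∀ q ∈ s.erase p, w q ≠ 0 → f q = f p := fun q hq hwq => by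
    have hterm := (Finset.sum_eq_zero_iff_of_nonneg fun q hq =>
      mul_nonneg (hw₀ q hq) (sub_nonneg.2 (hf q (Finset.mem_of_mem_erase hq)))).1 hft q hq
    linarith [(mul_eq_zero.1 hterm).resolve_left hwq]
  have hpt : p ∈ convexHull ℝ (t : Set E) := by
    refine Finset.mem_convexHull'.2 ⟨w, fun q hq => hw₀ q (Finset.mem_of_mem_filter q hq), ?_, ?_⟩
    · rw [Finset.sum_filter_of_ne hw, hw₁]
    · rw [Finset.sum_filter_of_ne fun q hq hwq => hw q hq (left_ne_zero_of_smul hwq), hwp]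
  have hnt : ¬(t : Set E).Subsingleton := fun hsub => by
    rw [hsub.convex.convexHull_eq] at hpt
    exact Finset.notMem_erase p s (Finset.mem_of_mem_filter p hpt)
  obtain ⟨q₁, hq₁, q₂, hq₂, hne⟩ := Set.not_subsingleton_iff.1 hnt
  rw [Finset.mem_coe, Finset.mem_filter] at hq₁ hq₂
  exact ⟨q₁, hq₁.1, q₂, hq₂.1, hne, hq₁.2, hq₂.2⟩

theorem hullVx_subset (P : Finset Pt) : hullVx P ⊆ P :=
  Finset.filter_subset _ _

section GenPos

variable {P : Finset Pt}

theorem GenPos.det2_ne_zero (hgp : GenPos P) {p q r : Pt} (hp : p ∈ P) (hq : q ∈ P) (hr : r ∈ P)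
    (hpq : p ≠ q) (hpr : p ≠ r) (hqr : q ≠ r) : det2 (q - p) (r - p) ≠ 0 :=
  fun h => hgp p hp q hq r hr hpq hpr hqr (collinear_of_det2_eq_zero h)

theorem GenPos.notMem_openSegment (hgp : GenPos P) {b c r : Pt} (hb : b ∈ P) (hc : c ∈ P)
    (hr : r ∈ P) (hbc : b ≠ c) (hbr : b ≠ r) (hcr : c ≠ r) : r ∉ openSegment ℝ b c := fun h => by
  have hcol := (mem_segment_iff_wbtw.1 (openSegment_subset_segment ℝ b c h)).collinear
  exact hgp b hb r hr c hc hbr hbc hcr.symm hcol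

theorem GenPos.affineSpan_eq_top (hgp : GenPos P) (hP : 2 < P.card) :
    affineSpan ℝ (P : Set Pt) = ⊤ := by
  obtain ⟨p, q, r, hp, hq, hr, hpq, hpr, hqr⟩ := Finset.two_lt_card_iff.1 hP
  have hind : AffineIndependent ℝ ![p, q, r] :=
    affineIndependent_iff_not_collinear_set.2 (hgp p hp q hq r hr hpq hpr hqr)
  have htop : affineSpan ℝ (Set.range ![p, q, r]) = ⊤ := by
    rw [hind.affineSpan_eq_top_iff_card_eq_finrank_add_one, Module.finrank_prod,
      Module.finrank_self, Fintype.card_fin]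
  refine eq_top_iff.2 (htop.symm.le.trans (affineSpan_mono ℝ ?_))
  rintro _ ⟨i, rfl⟩
  fin_cases i <;> assumption

/-- Otherwise a supporting line of the hull at `p` would contain `p` and two of the points of which
`p` is a convex combination. -/
theorem GenPos.mem_interior_convexHull (hgp : GenPos P) (hP : 2 < P.card)
    {p : Pt} (hp : p ∈ P) (hpv : p ∉ hullVx P) : p ∈ interior (convexHull ℝ (P : Set Pt)) := by
  have hpK : p ∈ convexHull ℝ ((P.erase p : Finset Pt) : Set Pt) := by
    simpa [hullVx, hp] using hpv
  by_contra hint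
  obtain ⟨f, hf, hmax⟩ := geometric_hahn_banach_of_nonempty_interior_point (convex_convexHull ℝ _)
    hint (interior_convexHull_nonempty_iff_affineSpan_eq_top.2 (hgp.affineSpan_eq_top hP))
  obtain ⟨q₁, hq₁, q₂, hq₂, hne, hf₁, hf₂⟩ := exists_ne_map_eq_of_mem_convexHull_erase
    f.toLinearMap hpK fun q hq => hmax q (subset_convexHull ℝ _ hq)
  have hf' : f.toLinearMap ≠ 0 := fun h0 => hf (ContinuousLinearMap.coe_injective h0)
  exact hgp.det2_ne_zero hp (Finset.mem_of_mem_erase hq₁) (Finset.mem_of_mem_erase hq₂)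
    (Finset.ne_of_mem_erase hq₁).symm (Finset.ne_of_mem_erase hq₂).symm hne
    (det2_sub_eq_zero_of_map_eq hf' hf₁ hf₂)

end GenPos

theorem exists_forall_lt_of_mem_hullVx {P : Finset Pt} {v : Pt} (hv : v ∈ hullVx P) :
    ∃ f : Pt →L[ℝ] ℝ, (∀ q ∈ P, q ≠ v → f q < f v) ∧
      ∀ z ∈ convexHull ℝ (P : Set Pt), f z ≤ f v := by
  rw [hullVx, Finset.mem_filter] at hv
  obtain ⟨g, u, hg, hgv⟩ := geometric_hahn_banach_closed_point (convex_convexHull ℝ _)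
    ((Finset.finite_toSet _).isCompact_convexHull ℝ).isClosed hv.2
  have hlt : ∀ q ∈ P, q ≠ v → g q < g v := fun q hq hqv =>
    (hg q (subset_convexHull ℝ _ (Finset.mem_erase.2 ⟨hqv, hq⟩))).trans hgv
  refine ⟨g, hlt, fun z hz => convexHull_min (fun q hq => ?_) (convex_halfSpace_le g.isLinear _) hz⟩
  rcases eq_or_ne q v with rfl | hqv
  exacts [le_refl (g q), (hlt q hq hqv).le]

theorem exists_mem_Ioo_min_eq_zero {α₀ α₁ β₀ β₁ : ℝ} (h₀ : 0 < min α₀ β₀) (h₁ : min α₁ β₁ < 0) :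
    ∃ t ∈ Set.Ioo (0 : ℝ) 1, min ((1 - t) * α₀ + t * α₁) ((1 - t) * β₀ + t * β₁) = 0 := by
  have hcont : ContinuousOn (fun t : ℝ => min ((1 - t) * α₀ + t * α₁) ((1 - t) * β₀ + t * β₁))
      (Set.Icc 0 1) := by fun_prop
  exact intermediate_value_Ioo' zero_le_one hcont ⟨by simpa using h₁, by simpa using h₀⟩

/-- By Cramer's rule (`det2_smul_eq_add`) this says that both coordinates of `w` in the basis
`u, v` are positive. -/
def InCone (u v w : Pt) : Prop :=
  0 < det2 w v * det2 u v ∧ 0 < det2 u w * det2 u v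

theorem not_inCone_iff_of_three {e₁ e₂ e₃ y : Pt}
    (h₁₂ : det2 e₁ e₂ ≠ 0) (h₁₃ : det2 e₁ e₃ ≠ 0) (h₂₃ : det2 e₂ e₃ ≠ 0)
    (h₁ : det2 e₁ y ≠ 0) (h₂ : det2 e₂ y ≠ 0) (h₃ : det2 e₃ y ≠ 0) :
    ¬((InCone e₁ e₂ y ↔ InCone e₁ e₂ e₃) ∧ (InCone e₁ e₃ y ↔ InCone e₁ e₃ e₂) ∧
      (InCone e₂ e₃ y ↔ InCone e₂ e₃ e₁)) := by
  -- Only this Plücker relation among the six determinants is needed; the rest is a check of sign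
  -- patterns.
  have plucker :
      det2 e₁ e₂ * det2 e₃ y - det2 e₁ e₃ * det2 e₂ y + det2 e₂ e₃ * det2 e₁ y = 0 := by
    unfold det2; ring
  unfold InCone
  rw [det2_swap y e₂, det2_swap y e₃, det2_swap e₃ e₂, det2_swap e₂ e₁]
  generalize det2 e₁ e₂ = a at *
  generalize det2 e₁ e₃ = b at *
  generalize det2 e₂ e₃ = c at *
  generalize det2 e₁ y = f₁ at *
  generalize det2 e₂ y = f₂ at *
  generalize det2 e₃ y = f₃ at *
  rintro ⟨H₁, H₂, H₃⟩
  rcases h₁₂.lt_or_gt with ha | ha <;> rcases h₁₃.lt_or_gt with hb | hb <;>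
    rcases h₂₃.lt_or_gt with hc | hc <;> rcases h₁.lt_or_gt with g₁ | g₁ <;>
    rcases h₂.lt_or_gt with g₂ | g₂ <;> rcases h₃.lt_or_gt with g₃ | g₃ <;>
    simp only [mul_pos_iff, neg_pos, neg_neg_iff_pos, ha, hb, hc, g₁, g₂, g₃, ha.not_gt,
      hb.not_gt, hc.not_gt, g₁.not_gt, g₂.not_gt, g₃.not_gt, and_true, and_false, or_false,
      false_or, iff_true, iff_false, not_true] at H₁ H₂ H₃ <;>
    nlinarith

namespace KConnected

variable {V : Type*} [Fintype V] {G : SimpleGraph V} {k : ℕ}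

theorem exists_adj_of_not_iff (hG : KConnected G k) {S : Finset V} (hS : S.card < k)
    (Q : V → Prop) {x y : V} (hx : x ∉ S) (hy : y ∉ S) (hxy : ¬(Q x ↔ Q y)) :
    ∃ b c, b ∉ S ∧ c ∉ S ∧ G.Adj b c ∧ Q b ∧ ¬Q c := by
  wlog hQx : Q x generalizing x y
  · exact this hy hx (fun h => hxy h.symm) (by tauto)
  obtain ⟨w⟩ := (hG.2 S hS).preconnected ⟨x, hx⟩ ⟨y, hy⟩
  obtain ⟨d, -, hd₁, hd₂⟩ :=
    w.exists_boundary_dart {z | Q z.1} hQx fun hQy => hxy (iff_of_true hQx hQy)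
  exact ⟨d.fst.1, d.snd.1, d.fst.2, d.snd.2, d.adj, hd₁, hd₂⟩

theorem le_degree (hG : KConnected G k) (v : V) : k ≤ G.degree v := by
  by_contra! hlt
  rw [← G.card_neighborFinset_eq_degree] at hlt
  have hcard : (insert v (G.neighborFinset v)).card < (Finset.univ : Finset V).card := by
    have := hG.1
    rw [Finset.card_univ]
    exact (Finset.card_insert_le _ _).trans_lt (by omega)
  obtain ⟨y, -, hy⟩ := Finset.exists_mem_notMem_of_card_lt_card hcard
  rw [Finset.mem_insert, not_or] at hy
  obtain ⟨b, c, -, hc, hbc, rfl, -⟩ := hG.exists_adj_of_not_iff hlt (· = v)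
    (G.notMem_neighborFinset_self v) hy.2 (by simpa using hy.1)
  exact hc ((G.mem_neighborFinset _ _).2 hbc)

end KConnected

namespace PlaneGraph

variable {P : Finset Pt} (G : PlaneGraph P)

theorem adj_comm {p q : Pt} : G.Adj p q ↔ G.Adj q p :=
  ⟨G.symm, G.symm⟩

/-- `a + s • (v - a)` runs along the ray from `a` through `v`: before `v` it lies on the edge `av`,
which `bc` cannot cross; at `a` or `v` three points of `P` would be collinear; beyond `v` it lies
outside the convex hull. -/
theorem add_smul_sub_notMem_openSegment (hgp : GenPos P) {a v b c : Pt} (ha : a ∈ P)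
    (hv : v ∈ hullVx P) (hav : G.Adj a v) (hbc : G.Adj b c) (hba : b ≠ a) (hbv : b ≠ v)
    (hca : c ≠ a) (hcv : c ≠ v) {s : ℝ} (hs : 0 ≤ s) :
    a + s • (v - a) ∉ openSegment ℝ b c := by
  intro hz
  have hb : b ∈ P := G.mem_left hbc
  have hc : c ∈ P := G.mem_left (G.symm hbc)
  rcases hs.eq_or_lt with rfl | hs
  · rw [zero_smul, add_zero] at hz
    exact hgp.notMem_openSegment hb hc ha (G.ne hbc) hba hca hz
  rcases lt_trichotomy s 1 with hs₁ | rfl | hs₁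
  · have hav' : a + s • (v - a) ∈ openSegment ℝ a v := by
      rw [openSegment_eq_image']
      exact ⟨s, ⟨hs, hs₁⟩, rfl⟩
    have hbm : b ∈ ({a, v} : Set Pt) := by
      rw [← G.noncross hbc hav ⟨_, hz, hav'⟩]
      exact Set.mem_insert b _
    rcases hbm with rfl | rfl
    exacts [hba rfl, hbv rfl]
  · rw [one_smul, add_sub_cancel] at hz
    exact hgp.notMem_openSegment hb hc (hullVx_subset P hv) (G.ne hbc) hbv hcv hz
  · obtain ⟨f, hlt, hle⟩ := exists_forall_lt_of_mem_hullVx hv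
    have hzK : a + s • (v - a) ∈ convexHull ℝ (P : Set Pt) :=
      (convex_convexHull ℝ _).segment_subset (subset_convexHull ℝ _ hb)
        (subset_convexHull ℝ _ hc) (openSegment_subset_segment ℝ b c hz)
    have hfz := hle _ hzK
    have hfa := hlt a ha (G.ne hav)
    rw [map_add, map_smul, map_sub, smul_eq_mul] at hfz
    nlinarith

/-- By the intermediate value theorem an edge leaving the cone would meet one of its two bounding
rays, contradicting `add_smul_sub_notMem_openSegment`. -/
theorem inCone_of_adj (hgp : GenPos P) {a v₁ v₂ b c : Pt} (ha : a ∈ P) (hv₁ : v₁ ∈ hullVx P)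
    (hv₂ : v₂ ∈ hullVx P) (h₁₂ : v₁ ≠ v₂) (hav₁ : G.Adj a v₁) (hav₂ : G.Adj a v₂)
    (hbc : G.Adj b c) (hb : b ∉ ({a, v₁, v₂} : Finset Pt)) (hc : c ∉ ({a, v₁, v₂} : Finset Pt))
    (hbK : InCone (v₁ - a) (v₂ - a) (b - a)) : InCone (v₁ - a) (v₂ - a) (c - a) := by
  simp only [Finset.mem_insert, Finset.mem_singleton, not_or] at hb hc
  obtain ⟨hba, hb₁, hb₂⟩ := hb
  obtain ⟨hca, hc₁, hc₂⟩ := hc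
  have hcP : c ∈ P := G.mem_left (G.symm hbc)
  have hv₁P : v₁ ∈ P := hullVx_subset P hv₁
  have hv₂P : v₂ ∈ P := hullVx_subset P hv₂
  set e₁ := v₁ - a
  set e₂ := v₂ - a
  have hD : det2 e₁ e₂ ≠ 0 := hgp.det2_ne_zero ha hv₁P hv₂P (G.ne hav₁) (G.ne hav₂) h₁₂
  have hc₂' : det2 (c - a) e₂ ≠ 0 := by
    rw [det2_swap, neg_ne_zero]
    exact hgp.det2_ne_zero ha hv₂P hcP (G.ne hav₂) (Ne.symm hca) (Ne.symm hc₂)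
  have hc₁' : det2 e₁ (c - a) ≠ 0 :=
    hgp.det2_ne_zero ha hv₁P hcP (G.ne hav₁) (Ne.symm hca) (Ne.symm hc₁)
  by_contra hcK
  have hcK' : min (det2 (c - a) e₂ * det2 e₁ e₂) (det2 e₁ (c - a) * det2 e₁ e₂) < 0 := by
    rw [InCone, not_and_or, not_lt, not_lt] at hcK
    exact min_lt_iff.2 (hcK.imp (·.lt_of_ne (mul_ne_zero hc₂' hD))
      (·.lt_of_ne (mul_ne_zero hc₁' hD)))
  obtain ⟨t, ht, hmin⟩ := exists_mem_Ioo_min_eq_zero (lt_min hbK.1 hbK.2) hcK'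
  set z := b + t • (c - b)
  have hz : z ∈ openSegment ℝ b c := by
    rw [openSegment_eq_image']
    exact ⟨t, ht, rfl⟩
  have hmin' : min (det2 (z - a) e₂ * det2 e₁ e₂) (det2 e₁ (z - a) * det2 e₁ e₂) = 0 := by
    rw [det2_add_smul_sub_left, det2_add_smul_sub_right, ← hmin]
    ring_nf
  rcases min_eq_iff.1 hmin' with ⟨h₂, hle⟩ | ⟨h₁, hle⟩
  · obtain ⟨s, hs, hzs⟩ := exists_nonneg_smul_of_det2_eq_zero hD
      ((mul_eq_zero.1 h₂).resolve_right hD) (h₂ ▸ hle)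
    refine G.add_smul_sub_notMem_openSegment hgp ha hv₂ hav₂ hbc hba hb₂ hca hc₂ hs ?_
    rwa [← hzs, add_sub_cancel]
  · have hD' : det2 e₂ e₁ ≠ 0 := by rwa [det2_swap, neg_ne_zero]
    have h₁' : det2 (z - a) e₁ = 0 := by
      rw [det2_swap, (mul_eq_zero.1 h₁).resolve_right hD, neg_zero]
    obtain ⟨s, hs, hzs⟩ := exists_nonneg_smul_of_det2_eq_zero hD' h₁' (by
      rw [det2_swap e₂, det2_swap e₂]
      linarith)
    refine G.add_smul_sub_notMem_openSegment hgp ha hv₁ hav₁ hbc hba hb₁ hca hc₁ hs ?_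
    rwa [← hzs, add_sub_cancel]

theorem degree_graph {v : Pt} (hv : v ∈ P) :
    G.graph.degree ⟨v, hv⟩ = (P.filter (G.Adj v)).card := by
  rw [← SimpleGraph.card_neighborFinset_eq_degree, ← Finset.card_map (Function.Embedding.subtype _)]
  congr 1
  ext q
  simp only [Finset.mem_map, Function.Embedding.coe_subtype, SimpleGraph.mem_neighborFinset,
    Finset.mem_filter]
  exact ⟨fun ⟨u, hu, huq⟩ => huq ▸ ⟨u.2, hu⟩, fun ⟨hq, hvq⟩ => ⟨⟨q, hq⟩, hvq, rfl⟩⟩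

/-- Since no edge leaves the cone (`inCone_of_adj`), a vertex inside it and one outside would be
separated by the three vertices `a`, `v₁`, `v₂`. -/
theorem inCone_iff_of_kConnected (hgp : GenPos P) (hK : KConnected G.graph 4) {a v₁ v₂ x y : Pt}
    (ha : a ∈ P) (hv₁ : v₁ ∈ hullVx P) (hv₂ : v₂ ∈ hullVx P) (h₁₂ : v₁ ≠ v₂)
    (hav₁ : G.Adj a v₁) (hav₂ : G.Adj a v₂) (hx : x ∈ P) (hy : y ∈ P)
    (hxS : x ∉ ({a, v₁, v₂} : Finset Pt)) (hyS : y ∉ ({a, v₁, v₂} : Finset Pt)) :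
    InCone (v₁ - a) (v₂ - a) (x - a) ↔ InCone (v₁ - a) (v₂ - a) (y - a) := by
  by_contra hxy
  set S := ({a, v₁, v₂} : Finset Pt).subtype (· ∈ P)
  have hS : S.card < 4 := by
    rw [Finset.card_subtype]
    exact (Finset.card_filter_le _ _).trans_lt (Finset.card_le_three.trans_lt (by norm_num))
  obtain ⟨b, c, hb, hc, hbc, hbK, hcK⟩ := hK.exists_adj_of_not_iff hS
    (fun z => InCone (v₁ - a) (v₂ - a) (z.1 - a)) (x := ⟨x, hx⟩) (y := ⟨y, hy⟩)
    (by simpa [S] using hxS) (by simpa [S] using hyS) hxy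
  exact hcK (G.inCone_of_adj hgp ha hv₁ hv₂ h₁₂ hav₁ hav₂ hbc (by simpa [S] using hb)
    (by simpa [S] using hc) hbK)

theorem card_filter_hullVx_adj_le_two (hgp : GenPos P) (hK : KConnected G.graph 4) {a : Pt}
    (ha : a ∈ P) : ((hullVx P).filter (G.Adj a)).card ≤ 2 := by
  by_contra! h
  obtain ⟨v₁, v₂, v₃, h₁, h₂, h₃, h₁₂, h₁₃, h₂₃⟩ := Finset.two_lt_card_iff.1 h
  rw [Finset.mem_filter] at h₁ h₂ h₃
  obtain ⟨hv₁h, hav₁⟩ := h₁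
  obtain ⟨hv₂h, hav₂⟩ := h₂
  obtain ⟨hv₃h, hav₃⟩ := h₃
  have hP : ({a, v₁, v₂, v₃} : Finset Pt).card < P.card := by
    have := hK.1
    rw [Fintype.card_coe] at this
    exact Finset.card_le_four.trans_lt (by omega)
  obtain ⟨x, hx, hxS⟩ := Finset.exists_mem_notMem_of_card_lt_card hP
  simp only [Finset.mem_insert, Finset.mem_singleton, not_or] at hxS
  obtain ⟨hxa, hx₁, hx₂, hx₃⟩ := hxS
  have hv₁ := hullVx_subset P hv₁h
  have hv₂ := hullVx_subset P hv₂h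
  have hv₃ := hullVx_subset P hv₃h
  have ha₁ := G.ne hav₁
  have ha₂ := G.ne hav₂
  have ha₃ := G.ne hav₃
  refine not_inCone_iff_of_three (hgp.det2_ne_zero ha hv₁ hv₂ ha₁ ha₂ h₁₂)
    (hgp.det2_ne_zero ha hv₁ hv₃ ha₁ ha₃ h₁₃) (hgp.det2_ne_zero ha hv₂ hv₃ ha₂ ha₃ h₂₃)
    (hgp.det2_ne_zero ha hv₁ hx ha₁ (Ne.symm hxa) (Ne.symm hx₁))
    (hgp.det2_ne_zero ha hv₂ hx ha₂ (Ne.symm hxa) (Ne.symm hx₂))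
    (hgp.det2_ne_zero ha hv₃ hx ha₃ (Ne.symm hxa) (Ne.symm hx₃)) ⟨?_, ?_, ?_⟩ <;>
  refine G.inCone_iff_of_kConnected hgp hK ha ‹_› ‹_› ‹_› ‹_› ‹_› hx ‹_› ?_ ?_ <;>
  simp [*, Ne.symm ha₁, Ne.symm ha₂, Ne.symm ha₃, Ne.symm h₁₂, Ne.symm h₁₃, Ne.symm h₂₃]

theorem two_le_card_filter_sdiff_hullVx_adj (hgp : GenPos P) (hK : KConnected G.graph 4) {v : Pt}
    (hv : v ∈ P) : 2 ≤ ((P \ hullVx P).filter (G.Adj v)).card := by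
  have hdeg : 4 ≤ (P.filter (G.Adj v)).card := G.degree_graph hv ▸ hK.le_degree _
  have hsplit :
      P.filter (G.Adj v) = (hullVx P).filter (G.Adj v) ∪ (P \ hullVx P).filter (G.Adj v) := by
    rw [← Finset.filter_union, Finset.union_sdiff_of_subset (hullVx_subset P)]
  have := hsplit ▸ Finset.card_union_le _ _
  have := G.card_filter_hullVx_adj_le_two hgp hK hv
  omega

end PlaneGraph

/-- Necessary Condition 1: if `P` admits a 4-connected
triangulation, then the number of interior points of `P` is at least the
number of hull vertices of `P`. -/
theorem necessary_condition_one (P : Finset Pt) (hgp : GenPos P)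
    (h : ∃ T : Triangulation P, KConnected T.toPlaneGraph.graph 4) :
    (hullVx P).card ≤ (intPts P).card := by
  obtain ⟨T, hK⟩ := h
  set G := T.toPlaneGraph
  have hP : 2 < P.card := by
    have := hK.1
    rw [Fintype.card_coe] at this
    omega
  have hint : P \ hullVx P ⊆ intPts P := fun p hp => by
    rw [Finset.mem_sdiff] at hp
    exact Finset.mem_filter.2 ⟨hp.1, hgp.mem_interior_convexHull hP hp.1 hp.2⟩
  have hcount : (hullVx P).card * 2 ≤ (P \ hullVx P).card * 2 := by
    refine Finset.card_mul_le_card_mul G.Adj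
      (fun v hv => G.two_le_card_filter_sdiff_hullVx_adj hgp hK (hullVx_subset P hv))
      (fun u hu => ?_)
    rw [Finset.bipartiteBelow, Finset.filter_congr fun w _ => G.adj_comm]
    exact G.card_filter_hullVx_adj_le_two hgp hK (Finset.mem_sdiff.1 hu).1
  exact (Nat.le_of_mul_le_mul_right hcount two_pos).trans (Finset.card_le_card hint)
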